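/- arXiv:2512.18874 — 2 statements merged into one kernel-verified Lean document; each statement's English description precedes it below -/
import Mathlib

section
/- Fix λ > 0 and constants c₁, c₂⁻, c₂⁺, c₃ ≥ 0 with c₁ + c₂⁻ + c₂⁺ + c₃ = 1 and c₁ ≠ 1. For every bounded continuous g : ℝ → ℝ vanishing at ±∞ there exists a function f : ℝ → ℝ, continuous on ℝ, twice differentiable on ℝ ∖ {0} with one-sided second derivatives at 0, vanishing at ±∞, satisfying c₁ f(0) + c₂⁻ f'(0−) − c₂⁺ f'(0+) + (c₃/2) f''(0+) = 0 and λ f(x) − (1/2) f''(x) = g(x) for all x ≠ 0, with λ f(0) − (1/2) f''(0+) = g(0). -/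
/-!
With `s = √(2λ)`, the Brownian resolvent `f_p x = s⁻¹ ∫ e^{-s|x-t|} g t dt` solves
`λ f - f''/2 = g` on all of `ℝ`: splitting the integral at `x` gives
`f_p x = s⁻¹ (e^{-sx} ∫_{-∞}^x e^{st} g + e^{sx} ∫_x^∞ e^{-st} g)`, which the fundamental theorem
of calculus differentiates twice, and after the substitution `t ↦ x - t` dominated convergence
shows `f_p → 0` at `±∞`. The kernel `e^{-s|x|}` solves the homogeneous equation away from `0`,
and its derivative jumps from `s` to `-s` at `0`. Adding `A e^{-s|x|}` therefore changes the
boundary functional by `A (c₁ + s (c₂⁻ + c₂⁺) + c₃ s² / 2)`, a positive multiple of `A`, so a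
unique `A` makes it vanish.
-/

open Filter Set Real MeasureTheory Topology
open scoped ZeroAtInfty

theorem exists_norm_le_of_tendsto_atTop_atBot {E : Type*} [NormedAddCommGroup E] {g : ℝ → E}
    (hg : Continuous g) (htop : Tendsto g atTop (𝓝 0)) (hbot : Tendsto g atBot (𝓝 0)) :
    ∃ C, ∀ x, ‖g x‖ ≤ C :=
  let g₀ : C₀(ℝ, E) := ⟨⟨g, hg⟩, by rw [cocompact_eq_atBot_atTop]; exact hbot.sup htop⟩
  ⟨‖g₀.toBCF‖, g₀.toBCF.norm_coe_le_norm⟩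

section FTC
variable {E : Type*} [NormedAddCommGroup E] [NormedSpace ℝ E] [CompleteSpace E] {f : ℝ → E}

theorem hasDerivAt_integral_Iic (hf : Continuous f) (hint : ∀ x, IntegrableOn f (Iic x)) (x : ℝ) :
    HasDerivAt (fun y => ∫ t in Iic y, f t) (f x) x := by
  have h : (fun y => ∫ t in Iic y, f t) = fun y => (∫ t in Iic 0, f t) + ∫ t in 0..y, f t := by
    funext y
    rw [← intervalIntegral.integral_Iic_sub_Iic (hint 0) (hint y), add_sub_cancel]
  rw [h]
  exact (intervalIntegral.integral_hasDerivAt_right (hf.intervalIntegrable _ _)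
    (hf.stronglyMeasurableAtFilter _ _) hf.continuousAt).const_add _

theorem hasDerivAt_integral_Ioi (hf : Continuous f) (hint : ∀ x, IntegrableOn f (Ioi x)) (x : ℝ) :
    HasDerivAt (fun y => ∫ t in Ioi y, f t) (-f x) x := by
  have h : (fun y => ∫ t in Ioi y, f t) = fun y => (∫ t in Ioi 0, f t) - ∫ t in 0..y, f t := by
    funext y
    rw [← intervalIntegral.integral_Ioi_sub_Ioi' (hint 0) (hint y), sub_sub_cancel]
  rw [h]
  exact (intervalIntegral.integral_hasDerivAt_right (hf.intervalIntegrable _ _)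
    (hf.stronglyMeasurableAtFilter _ _) hf.continuousAt).const_sub _

end FTC

theorem integrable_exp_neg_mul_abs {s : ℝ} (hs : 0 < s) :
    Integrable fun u : ℝ => exp (-s * |u|) := by
  rw [← integrableOn_univ, ← Iic_union_Ioi (a := 0)]
  refine IntegrableOn.union ?_ ?_
  · exact (integrableOn_exp_mul_Iic hs 0).congr_fun
      (fun u hu => by simp [abs_of_nonpos (mem_Iic.1 hu)]) measurableSet_Iic
  · exact (integrableOn_exp_mul_Ioi (neg_neg_of_pos hs) 0).congr_fun
      (fun u hu => by simp [abs_of_pos (mem_Ioi.1 hu)]) measurableSet_Ioi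

theorem hasDerivAt_exp_const_mul (c x : ℝ) :
    HasDerivAt (fun y => exp (c * y)) (c * exp (c * x)) x := by
  simpa [mul_comm] using ((hasDerivAt_id x).const_mul c).exp

/-- For `s = √(2λ)` this is the Brownian resolvent `∫₀^∞ e^{-λt} 𝔼ₓ[g(Bₜ)] dt`. -/
noncomputable def brownianResolvent (s : ℝ) (g : ℝ → ℝ) (x : ℝ) : ℝ :=
  s⁻¹ * ∫ t, exp (-s * |x - t|) * g t

noncomputable def brownianResolventDeriv (s : ℝ) (g : ℝ → ℝ) (x : ℝ) : ℝ :=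
  exp (s * x) * (∫ t in Ioi x, exp (-s * t) * g t) - exp (-s * x) * ∫ t in Iic x, exp (s * t) * g t

namespace brownianResolvent

variable {s C : ℝ} {g : ℝ → ℝ}

theorem eq_exp_mul_add (hs : 0 < s) (hg : Continuous g) (hC : ∀ x, ‖g x‖ ≤ C) (x : ℝ) :
    brownianResolvent s g x = s⁻¹ * (exp (-s * x) * (∫ t in Iic x, exp (s * t) * g t) +
      exp (s * x) * ∫ t in Ioi x, exp (-s * t) * g t) := by
  have hint : Integrable fun t => exp (-s * |x - t|) * g t :=
    ((integrable_exp_neg_mul_abs hs).comp_sub_left x).mul_bdd hg.aestronglyMeasurable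
      (ae_of_all _ hC)
  rw [brownianResolvent,
    ← intervalIntegral.integral_Iic_add_Ioi hint.integrableOn hint.integrableOn,
    ← integral_const_mul, ← integral_const_mul]
  congr 2
  · refine setIntegral_congr_fun measurableSet_Iic fun t ht => ?_
    rw [abs_of_nonneg (sub_nonneg.2 (mem_Iic.1 ht)), ← mul_assoc, ← exp_add]
    ring_nf
  · refine setIntegral_congr_fun measurableSet_Ioi fun t ht => ?_
    rw [abs_of_neg (sub_neg.2 (mem_Ioi.1 ht)), ← mul_assoc, ← exp_add]
    ring_nf

theorem hasDerivAt_integral_Iic_exp_mul (hs : 0 < s) (hg : Continuous g) (hC : ∀ x, ‖g x‖ ≤ C)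
    (x : ℝ) : HasDerivAt (fun y => ∫ t in Iic y, exp (s * t) * g t) (exp (s * x) * g x) x :=
  hasDerivAt_integral_Iic ((continuous_exp.comp (continuous_const_mul s)).mul hg)
    (fun y => (integrableOn_exp_mul_Iic hs y).mul_bdd hg.aestronglyMeasurable (ae_of_all _ hC)) x

theorem hasDerivAt_integral_Ioi_exp_mul (hs : 0 < s) (hg : Continuous g) (hC : ∀ x, ‖g x‖ ≤ C)
    (x : ℝ) : HasDerivAt (fun y => ∫ t in Ioi y, exp (-s * t) * g t) (-(exp (-s * x) * g x)) x :=
  hasDerivAt_integral_Ioi ((continuous_exp.comp (continuous_const_mul (-s))).mul hg)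
    (fun y => (integrableOn_exp_mul_Ioi (neg_neg_of_pos hs) y).mul_bdd hg.aestronglyMeasurable
      (ae_of_all _ hC)) x

theorem hasDerivAt (hs : 0 < s) (hg : Continuous g) (hC : ∀ x, ‖g x‖ ≤ C) (x : ℝ) :
    HasDerivAt (brownianResolvent s g) (brownianResolventDeriv s g x) x := by
  rw [funext (eq_exp_mul_add hs hg hC)]
  have hU := hasDerivAt_integral_Iic_exp_mul hs hg hC x
  have hV := hasDerivAt_integral_Ioi_exp_mul hs hg hC x
  refine ((((hasDerivAt_exp_const_mul (-s) x).mul hU).add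
    ((hasDerivAt_exp_const_mul s x).mul hV)).const_mul s⁻¹).congr_deriv ?_
  rw [brownianResolventDeriv]
  field_simp
  ring

theorem hasDerivAt_deriv (hs : 0 < s) (hg : Continuous g) (hC : ∀ x, ‖g x‖ ≤ C) (x : ℝ) :
    HasDerivAt (brownianResolventDeriv s g) (s ^ 2 * brownianResolvent s g x - 2 * g x) x := by
  have hU := hasDerivAt_integral_Iic_exp_mul hs hg hC x
  have hV := hasDerivAt_integral_Ioi_exp_mul hs hg hC x
  refine (((hasDerivAt_exp_const_mul s x).mul hV).sub
    ((hasDerivAt_exp_const_mul (-s) x).mul hU)).congr_deriv ?_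
  have h : exp (s * x) * exp (-(s * x)) = 1 := by rw [← exp_add, add_neg_cancel, exp_zero]
  rw [eq_exp_mul_add hs hg hC]
  field_simp
  linear_combination (-2 * g x) * h

theorem tendsto {l : Filter ℝ} [l.IsCountablyGenerated] (hs : 0 < s) (hg : Continuous g)
    (hC : ∀ x, ‖g x‖ ≤ C) (hl : ∀ u, Tendsto (fun x => x - u) l l) (hgl : Tendsto g l (𝓝 0)) :
    Tendsto (brownianResolvent s g) l (𝓝 0) := by
  have h : brownianResolvent s g = fun x => s⁻¹ * ∫ u, exp (-s * |u|) * g (x - u) := by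
    funext x
    rw [brownianResolvent, ← integral_sub_left_eq_self _ volume x]
    simp only [sub_sub_cancel]
  rw [h]
  have hlim := tendsto_integral_filter_of_dominated_convergence (fun u => exp (-s * |u|) * C)
    (Eventually.of_forall fun x =>
      (by fun_prop : Continuous fun u => exp (-s * |u|) * g (x - u)).aestronglyMeasurable)
    (Eventually.of_forall fun x => ae_of_all _ fun u => ?_)
    ((integrable_exp_neg_mul_abs hs).mul_const C)
    (ae_of_all _ fun u => (hgl.comp (hl u)).const_mul (exp (-s * |u|)))
  · simpa using hlim.const_mul s⁻¹
  · rw [norm_mul, norm_of_nonneg (exp_pos _).le]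
    exact mul_le_mul_of_nonneg_left (hC _) (exp_pos _).le

end brownianResolvent

noncomputable def expNegAbs (s x : ℝ) : ℝ := exp (-s * |x|)

noncomputable def expNegAbsDeriv (s x : ℝ) : ℝ := -s * SignType.sign x * exp (-s * |x|)

theorem continuous_expNegAbs (s : ℝ) : Continuous (expNegAbs s) := by
  unfold expNegAbs; fun_prop

theorem tendsto_expNegAbs {s : ℝ} {l : Filter ℝ} (hs : 0 < s) (hl : Tendsto (|·|) l atTop) :
    Tendsto (expNegAbs s) l (𝓝 0) :=
  tendsto_exp_atBot.comp (hl.const_mul_atTop_of_neg (neg_neg_of_pos hs))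

theorem hasDerivAt_sign_of_ne_zero {x : ℝ} (hx : x ≠ 0) :
    HasDerivAt (fun y : ℝ => (SignType.sign y : ℝ)) 0 x := by
  refine (hasDerivAt_const x (SignType.sign x : ℝ)).congr_of_eventuallyEq ?_
  filter_upwards [continuousAt_sign_of_ne_zero hx
    ((isOpen_discrete {SignType.sign x}).mem_nhds rfl)] with y hy
  rw [mem_singleton_iff.1 hy]

theorem hasDerivAt_expNegAbs (s : ℝ) {x : ℝ} (hx : x ≠ 0) :
    HasDerivAt (expNegAbs s) (expNegAbsDeriv s x) x :=
  (((hasDerivAt_abs hx).const_mul (-s)).exp).congr_deriv (by rw [expNegAbsDeriv]; ring)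

theorem hasDerivAt_expNegAbsDeriv (s : ℝ) {x : ℝ} (hx : x ≠ 0) :
    HasDerivAt (expNegAbsDeriv s) (s ^ 2 * expNegAbs s x) x := by
  have hsign : (SignType.sign x : ℝ) ^ 2 = 1 := by rcases hx.lt_or_gt with h | h <;> simp [h]
  refine (((hasDerivAt_sign_of_ne_zero hx).const_mul (-s)).mul
    (hasDerivAt_expNegAbs s hx)).congr_deriv ?_
  rw [expNegAbsDeriv, expNegAbs]
  linear_combination s ^ 2 * exp (-s * |x|) * hsign

theorem tendsto_expNegAbsDeriv_nhdsLT (s : ℝ) : Tendsto (expNegAbsDeriv s) (𝓝[<] 0) (𝓝 s) := by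
  have h : Tendsto (fun y => s * expNegAbs s y) (𝓝[<] 0) (𝓝 s) := by
    simpa [expNegAbs] using
      (((continuous_expNegAbs s).tendsto 0).mono_left nhdsWithin_le_nhds).const_mul s
  refine h.congr' (eventually_nhdsWithin_of_forall fun y hy => ?_)
  simp [expNegAbsDeriv, expNegAbs, sign_neg (mem_Iio.1 hy)]

theorem tendsto_expNegAbsDeriv_nhdsGT (s : ℝ) : Tendsto (expNegAbsDeriv s) (𝓝[>] 0) (𝓝 (-s)) := by
  have h : Tendsto (fun y => -s * expNegAbs s y) (𝓝[>] 0) (𝓝 (-s)) := by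
    simpa [expNegAbs] using
      (((continuous_expNegAbs s).tendsto 0).mono_left nhdsWithin_le_nhds).const_mul (-s)
  refine h.congr' (eventually_nhdsWithin_of_forall fun y hy => ?_)
  simp [expNegAbsDeriv, expNegAbs, sign_pos (mem_Ioi.1 hy)]

theorem feller_denominator_pos {s c₁ c₂m c₂p c₃ : ℝ} (hs : 0 < s) (hc₁ : 0 ≤ c₁) (hc₂m : 0 ≤ c₂m)
    (hc₂p : 0 ≤ c₂p) (hc₃ : 0 ≤ c₃) (hsum : c₁ + c₂m + c₂p + c₃ = 1) :
    0 < c₁ + s * (c₂m + c₂p) + c₃ / 2 * s ^ 2 := by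
  rcases hc₃.eq_or_lt with rfl | h₃
  · rcases (add_nonneg hc₂m hc₂p).eq_or_lt with h₂ | h₂
    · rw [← h₂]; linarith
    · positivity
  · positivity

theorem stmt_12_general (l : ℝ) (hl : 0 < l) (c₁ c₂m c₂p c₃ : ℝ)
    (hc₁ : 0 ≤ c₁) (hc₂m : 0 ≤ c₂m) (hc₂p : 0 ≤ c₂p) (hc₃ : 0 ≤ c₃)
    (hsum : c₁ + c₂m + c₂p + c₃ = 1)
    (g : ℝ → ℝ) (hg : Continuous g)
    (hgtop : Tendsto g atTop (nhds 0)) (hgbot : Tendsto g atBot (nhds 0)) :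
    ∃ (f f' f'' : ℝ → ℝ) (d0m d0p dd0p : ℝ),
      Continuous f ∧
      Tendsto f atTop (nhds 0) ∧ Tendsto f atBot (nhds 0) ∧
      (∀ x : ℝ, x ≠ 0 → HasDerivAt f (f' x) x) ∧
      (∀ x : ℝ, x ≠ 0 → HasDerivAt f' (f'' x) x) ∧
      Tendsto f' (nhdsWithin 0 (Iio 0)) (nhds d0m) ∧
      Tendsto f' (nhdsWithin 0 (Ioi 0)) (nhds d0p) ∧
      Tendsto f'' (nhdsWithin 0 (Ioi 0)) (nhds dd0p) ∧
      c₁ * f 0 + c₂m * d0m - c₂p * d0p + (c₃ / 2) * dd0p = 0 ∧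
      (∀ x : ℝ, x ≠ 0 → l * f x - (1 / 2) * f'' x = g x) ∧
      l * f 0 - (1 / 2) * dd0p = g 0 := by
  obtain ⟨C, hC⟩ := exists_norm_le_of_tendsto_atTop_atBot hg hgtop hgbot
  set s := √(2 * l)
  have hs : 0 < s := by positivity
  have hsl : s ^ 2 = 2 * l := sq_sqrt (by positivity)
  set F := brownianResolvent s g
  set F' := brownianResolventDeriv s g
  have hF := brownianResolvent.hasDerivAt hs hg hC
  have hF' := brownianResolvent.hasDerivAt_deriv hs hg hC
  obtain ⟨A, hA⟩ : ∃ A, (c₁ * F 0 + (c₂m - c₂p) * F' 0 + c₃ / 2 * (s ^ 2 * F 0 - 2 * g 0))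
      + A * (c₁ + s * (c₂m + c₂p) + c₃ / 2 * s ^ 2) = 0 :=
    ⟨_, by rw [div_mul_cancel₀ _ (feller_denominator_pos hs hc₁ hc₂m hc₂p hc₃ hsum).ne',
      add_neg_cancel]⟩
  set f := fun x => F x + A * expNegAbs s x
  have hf0 : f 0 = F 0 + A := by simp [f, expNegAbs]
  have hfc : Continuous f := (continuous_iff_continuousAt.2 fun x => (hF x).continuousAt).add
    (continuous_const.mul (continuous_expNegAbs s))
  have hf : ∀ {L : Filter ℝ} [L.IsCountablyGenerated], (∀ u, Tendsto (fun x => x - u) L L) →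
      Tendsto (|·|) L atTop → Tendsto g L (𝓝 0) → Tendsto f L (𝓝 0) := fun hL habs hgL => by
    simpa using (brownianResolvent.tendsto hs hg hC hL hgL).add
      ((tendsto_expNegAbs hs habs).const_mul A)
  have hF'0 := (hF' 0).continuousAt.tendsto
  refine ⟨f, fun x => F' x + A * expNegAbsDeriv s x, fun x => s ^ 2 * f x - 2 * g x,
    F' 0 + A * s, F' 0 - A * s, s ^ 2 * f 0 - 2 * g 0, hfc,
    hf (fun u => tendsto_atTop_add_const_right _ (-u) tendsto_id) tendsto_abs_atTop_atTop hgtop,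
    hf (fun u => tendsto_atBot_add_const_right _ (-u) tendsto_id) tendsto_abs_atBot_atTop hgbot,
    fun x hx => (hF x).add ((hasDerivAt_expNegAbs s hx).const_mul A),
    fun x hx => ((hF' x).add ((hasDerivAt_expNegAbsDeriv s hx).const_mul A)).congr_deriv
      (by ring),
    (hF'0.mono_left nhdsWithin_le_nhds).add ((tendsto_expNegAbsDeriv_nhdsLT s).const_mul A),
    by simpa [sub_eq_add_neg] using
      (hF'0.mono_left nhdsWithin_le_nhds).add ((tendsto_expNegAbsDeriv_nhdsGT s).const_mul A),
    ((by fun_prop : Continuous fun x => s ^ 2 * f x - 2 * g x).tendsto 0).mono_left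
      nhdsWithin_le_nhds, by rw [hf0]; linear_combination hA,
    fun x _ => by linear_combination (-f x) * hsl / 2, by linear_combination (-f 0) * hsl / 2⟩

/-- Solvability of the resolvent equation with Feller boundary condition at `0`:
for `λ > 0`, constants `c₁, c₂⁻, c₂⁺, c₃ ≥ 0` summing to `1` with `c₁ ≠ 1`, and any
continuous `g` vanishing at `±∞`, there is a continuous `f` vanishing at `±∞`, twice
differentiable away from `0` with one-sided first and second derivatives at `0`,
satisfying the boundary condition and `λ f − (1/2) f'' = g` (also at `0`, using `f''(0+)`). -/
theorem stmt_12 (l : ℝ) (hl : 0 < l) (c₁ c₂m c₂p c₃ : ℝ)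
    (hc₁ : 0 ≤ c₁) (hc₂m : 0 ≤ c₂m) (hc₂p : 0 ≤ c₂p) (hc₃ : 0 ≤ c₃)
    (hsum : c₁ + c₂m + c₂p + c₃ = 1) (hc₁ne : c₁ ≠ 1)
    (g : ℝ → ℝ) (hg : Continuous g)
    (hgtop : Tendsto g atTop (nhds 0)) (hgbot : Tendsto g atBot (nhds 0)) :
    ∃ (f f' f'' : ℝ → ℝ) (d0m d0p dd0p : ℝ),
      Continuous f ∧
      Tendsto f atTop (nhds 0) ∧ Tendsto f atBot (nhds 0) ∧
      (∀ x : ℝ, x ≠ 0 → HasDerivAt f (f' x) x) ∧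
      (∀ x : ℝ, x ≠ 0 → HasDerivAt f' (f'' x) x) ∧
      Tendsto f' (nhdsWithin 0 (Iio 0)) (nhds d0m) ∧
      Tendsto f' (nhdsWithin 0 (Ioi 0)) (nhds d0p) ∧
      Tendsto f'' (nhdsWithin 0 (Ioi 0)) (nhds dd0p) ∧
      c₁ * f 0 + c₂m * d0m - c₂p * d0p + (c₃ / 2) * dd0p = 0 ∧
      (∀ x : ℝ, x ≠ 0 → l * f x - (1 / 2) * f'' x = g x) ∧
      l * f 0 - (1 / 2) * dd0p = g 0 :=
  stmt_12_general l hl c₁ c₂m c₂p c₃ hc₁ hc₂m hc₂p hc₃ hsum g hg hgtop hgbot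
end

section
/- Let c₁, c₂⁻, c₂⁺, c₃ ≥ 0 with c₁ + c₂⁻ + c₂⁺ + c₃ = 1 and c₁ ≠ 1, and let β > 0. Suppose u : ℝ → ℝ is continuous, tends to 0 at ±∞, satisfies β u = (1/2) u'' on ℝ ∖ {0}, and satisfies the boundary condition c₁ u(0) + c₂⁻ u'(0−) − c₂⁺ u'(0+) + (c₃/2) u''(0+) = 0. Then u ≡ 0. -/
/-!
On each half-line `u'' = k² u` with `k = √(2β)`. The combinations `u' ± k u` then solve
first-order linear equations and equal `C e^{± k x}`; decay at infinity kills the growing mode,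
so `u' = -k u` on `(0, ∞)` and `u' = k u` on `(-∞, 0)`. Hence the one-sided limits are
`u'(0±) = ∓ k u(0)` and `u''(0+) = 2β u(0)`, and the boundary condition reads
`u(0) (c₁ + k (c₂⁻ + c₂⁺) + β c₃) = 0`. The bracket is a positive combination of weights summing
to `1`, so `u(0) = 0`, and then `u = u(0) e^{-k|x|} = 0`.
-/

open Filter Set Topology

theorem IsOpen.exists_eq_mul_exp_of_hasDerivAt {s : Set ℝ} (hs : IsOpen s)
    (hs' : IsPreconnected s) {g : ℝ → ℝ} {c : ℝ} (hg : ∀ x ∈ s, HasDerivAt g (c * g x) x) :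
    ∃ C, ∀ x ∈ s, g x = C * Real.exp (c * x) := by
  have hderiv : ∀ x ∈ s, HasDerivAt (fun x => g x * Real.exp (-(c * x))) 0 x := fun x hx =>
    ((hg x hx).mul (((hasDerivAt_id x).const_mul c).neg.exp)).congr_deriv (by ring)
  obtain ⟨C, hC⟩ := hs.exists_is_const_of_deriv_eq_zero hs'
    (fun x hx => (hderiv x hx).differentiableAt.differentiableWithinAt)
    (fun x hx => (hderiv x hx).deriv)
  refine ⟨C, fun x hx => ?_⟩
  rw [← hC x hx, mul_assoc, ← Real.exp_add, neg_add_cancel, Real.exp_zero, mul_one]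

theorem eqOn_neg_mul_of_tendsto_atTop_zero {k a : ℝ} (hk : 0 < k) {f f' f'' : ℝ → ℝ}
    (hf : ∀ x ∈ Ioi a, HasDerivAt f (f' x) x) (hf' : ∀ x ∈ Ioi a, HasDerivAt f' (f'' x) x)
    (hode : ∀ x ∈ Ioi a, f'' x = k ^ 2 * f x) (htop : Tendsto f atTop (𝓝 0)) :
    EqOn f' (fun x => -k * f x) (Ioi a) := by
  obtain ⟨C, hC⟩ := isOpen_Ioi.exists_eq_mul_exp_of_hasDerivAt isPreconnected_Ioi
    (g := fun x => f' x + k * f x) (c := k) fun x hx =>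
      ((hf' x hx).add ((hf x hx).const_mul k)).congr_deriv (by rw [hode x hx]; ring)
  obtain ⟨D, hD⟩ := isOpen_Ioi.exists_eq_mul_exp_of_hasDerivAt isPreconnected_Ioi
    (g := fun x => f' x - k * f x) (c := -k) fun x hx =>
      ((hf' x hx).sub ((hf x hx).const_mul k)).congr_deriv (by rw [hode x hx]; ring)
  have hexp : Tendsto (fun x => Real.exp (-k * x)) atTop (𝓝 0) :=
    Real.tendsto_exp_atBot.comp (tendsto_id.const_mul_atTop_of_neg (neg_neg_of_pos hk))
  -- `C = e^{-kx} (2k f + D e^{-kx})` on `(a, ∞)`, and the right-hand side tends to `0`.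
  have hC0 : C = 0 := by
    have hlim : Tendsto (fun x => Real.exp (-k * x) * (2 * k * f x + D * Real.exp (-k * x)))
        atTop (𝓝 0) := by
      simpa using hexp.mul ((htop.const_mul (2 * k)).add (hexp.const_mul D))
    refine tendsto_const_nhds_iff.mp (hlim.congr' ?_)
    filter_upwards [eventually_gt_atTop a] with x hx
    have hsum : 2 * k * f x + D * Real.exp (-k * x) = C * Real.exp (k * x) := by
      linarith [hC x hx, hD x hx]
    rw [hsum, mul_left_comm, ← Real.exp_add, neg_mul, neg_add_cancel, Real.exp_zero, mul_one]
  intro x hx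
  have h := hC x hx
  rw [hC0, zero_mul] at h
  show f' x = -k * f x
  linarith

theorem eqOn_mul_of_tendsto_atBot_zero {k a : ℝ} (hk : 0 < k) {f f' f'' : ℝ → ℝ}
    (hf : ∀ x ∈ Iio a, HasDerivAt f (f' x) x) (hf' : ∀ x ∈ Iio a, HasDerivAt f' (f'' x) x)
    (hode : ∀ x ∈ Iio a, f'' x = k ^ 2 * f x) (hbot : Tendsto f atBot (𝓝 0)) :
    EqOn f' (fun x => k * f x) (Iio a) := by
  have hneg : ∀ x ∈ Ioi (-a), -x ∈ Iio a := fun _ hx => mem_Iio.mpr (neg_lt.mp hx)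
  have hrefl := eqOn_neg_mul_of_tendsto_atTop_zero hk (a := -a) (f := fun x => f (-x))
    (f' := fun x => -f' (-x)) (f'' := fun x => f'' (-x))
    (fun x hx => by
      simpa [Function.comp_def] using (hf (-x) (hneg x hx)).comp x (hasDerivAt_neg x))
    (fun x hx => by
      simpa [Function.comp_def, Pi.neg_def] using
        ((hf' (-x) (hneg x hx)).comp x (hasDerivAt_neg x)).neg)
    (fun x hx => hode (-x) (hneg x hx)) (hbot.comp tendsto_neg_atTop_atBot)
  intro x hx
  simpa using hrefl (mem_Ioi.mpr (neg_lt_neg hx))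

theorem eqOn_zero_of_hasDerivAt_mul_of_tendsto {s : Set ℝ} (hs : IsOpen s)
    (hs' : IsPreconnected s) {a c : ℝ} [(𝓝[s] a).NeBot] {g : ℝ → ℝ}
    (hg : ∀ x ∈ s, HasDerivAt g (c * g x) x) (hlim : Tendsto g (𝓝[s] a) (𝓝 0)) :
    EqOn g 0 s := by
  obtain ⟨C, hC⟩ := hs.exists_eq_mul_exp_of_hasDerivAt hs' hg
  have hexp : Tendsto g (𝓝[s] a) (𝓝 (C * Real.exp (c * a))) :=
    (((Real.continuous_exp.comp (continuous_const.mul continuous_id)).const_mul C).tendsto a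
      |>.mono_left nhdsWithin_le_nhds).congr' (eventuallyEq_nhdsWithin_of_eqOn hC).symm
  have hC0 : C = 0 := by
    simpa [(Real.exp_pos _).ne'] using tendsto_nhds_unique hexp hlim
  intro x hx
  simp [hC x hx, hC0]

theorem eq_mul_of_tendsto_of_eqOn {X : Type*} [TopologicalSpace X] {s : Set X} {a : X}
    [(𝓝[s] a).NeBot] {g u : X → ℝ} {c d : ℝ} (hu : ContinuousAt u a)
    (hg : EqOn g (fun x => c * u x) s) (h : Tendsto g (𝓝[s] a) (𝓝 d)) : d = c * u a :=
  tendsto_nhds_unique h <| ((hu.tendsto.mono_left nhdsWithin_le_nhds).const_mul c).congr'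
    (eventuallyEq_nhdsWithin_of_eqOn hg).symm

theorem boundary_coeff_pos {β k c₁ c₂m c₂p c₃ : ℝ} (hβ : 0 < β) (hk : 0 < k)
    (hc₁ : 0 ≤ c₁) (hc₂m : 0 ≤ c₂m) (hc₂p : 0 ≤ c₂p) (hc₃ : 0 ≤ c₃)
    (hsum : c₁ + c₂m + c₂p + c₃ = 1) : 0 < c₁ + k * (c₂m + c₂p) + β * c₃ := by
  set m := min 1 (min k β)
  have hm : 0 < m := lt_min one_pos (lt_min hk hβ)
  have hm1 : m ≤ 1 := min_le_left _ _
  have hmk : m ≤ k := (min_le_right _ _).trans (min_le_left _ _)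
  have hmβ : m ≤ β := (min_le_right _ _).trans (min_le_right _ _)
  nlinarith [mul_le_mul_of_nonneg_right hm1 hc₁, mul_le_mul_of_nonneg_right hmk hc₂m,
    mul_le_mul_of_nonneg_right hmk hc₂p, mul_le_mul_of_nonneg_right hmβ hc₃]

theorem stmt_13_general (β : ℝ) (hβ : 0 < β) (c₁ c₂m c₂p c₃ : ℝ)
    (hc₁ : 0 ≤ c₁) (hc₂m : 0 ≤ c₂m) (hc₂p : 0 ≤ c₂p) (hc₃ : 0 ≤ c₃)
    (hsum : c₁ + c₂m + c₂p + c₃ = 1)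
    (u u' u'' : ℝ → ℝ) (d0m d0p dd0p : ℝ)
    (hcont : Continuous u)
    (htop : Tendsto u atTop (nhds 0)) (hbot : Tendsto u atBot (nhds 0))
    (hderiv : ∀ x : ℝ, x ≠ 0 → HasDerivAt u (u' x) x)
    (hderiv2 : ∀ x : ℝ, x ≠ 0 → HasDerivAt u' (u'' x) x)
    (hode : ∀ x : ℝ, x ≠ 0 → β * u x = (1 / 2) * u'' x)
    (hd0m : Tendsto u' (nhdsWithin 0 (Iio 0)) (nhds d0m))
    (hd0p : Tendsto u' (nhdsWithin 0 (Ioi 0)) (nhds d0p))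
    (hdd0p : Tendsto u'' (nhdsWithin 0 (Ioi 0)) (nhds dd0p))
    (hbc : c₁ * u 0 + c₂m * d0m - c₂p * d0p + (c₃ / 2) * dd0p = 0) :
    ∀ x : ℝ, u x = 0 := by
  set k := Real.sqrt (2 * β)
  have hk : 0 < k := Real.sqrt_pos.mpr (by linarith)
  have hk2 : k ^ 2 = 2 * β := Real.sq_sqrt (by linarith)
  have hode' : ∀ x, x ≠ 0 → u'' x = k ^ 2 * u x := fun x hx => by
    rw [hk2]
    linarith [hode x hx]
  have hright : EqOn u' (fun x => -k * u x) (Ioi 0) := eqOn_neg_mul_of_tendsto_atTop_zero hk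
    (fun x hx => hderiv x hx.ne') (fun x hx => hderiv2 x hx.ne') (fun x hx => hode' x hx.ne') htop
  have hleft : EqOn u' (fun x => k * u x) (Iio 0) := eqOn_mul_of_tendsto_atBot_zero hk
    (fun x hx => hderiv x hx.ne) (fun x hx => hderiv2 x hx.ne) (fun x hx => hode' x hx.ne) hbot
  have hu0 : u 0 = 0 := by
    have hbracket := boundary_coeff_pos hβ hk hc₁ hc₂m hc₂p hc₃ hsum
    rw [eq_mul_of_tendsto_of_eqOn hcont.continuousAt hleft hd0m,
      eq_mul_of_tendsto_of_eqOn hcont.continuousAt hright hd0p,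
      eq_mul_of_tendsto_of_eqOn (s := Ioi 0) hcont.continuousAt (fun x hx => hode' x hx.ne') hdd0p,
      hk2] at hbc
    have hfactor : u 0 * (c₁ + k * (c₂m + c₂p) + β * c₃) = 0 := by linarith
    exact (mul_eq_zero.mp hfactor).resolve_right hbracket.ne'
  have hlim : Tendsto u (𝓝 0) (𝓝 0) := by simpa [hu0] using hcont.tendsto 0
  intro x
  rcases lt_trichotomy x 0 with hx | rfl | hx
  · exact eqOn_zero_of_hasDerivAt_mul_of_tendsto isOpen_Iio isPreconnected_Iio
      (fun y hy => hleft hy ▸ hderiv y hy.ne) (hlim.mono_left nhdsWithin_le_nhds) hx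
  · exact hu0
  · exact eqOn_zero_of_hasDerivAt_mul_of_tendsto isOpen_Ioi isPreconnected_Ioi
      (fun y hy => hright hy ▸ hderiv y hy.ne') (hlim.mono_left nhdsWithin_le_nhds) hx

/-- Uniqueness: if `u` is continuous on `ℝ`, tends to `0` at `±∞`, solves
`β u = (1/2) u''` away from `0`, and satisfies the Feller boundary condition
`c₁ u(0) + c₂⁻ u'(0−) − c₂⁺ u'(0+) + (c₃/2) u''(0+) = 0` with nonnegative constants
summing to `1` and `c₁ ≠ 1`, then `u ≡ 0`. -/
theorem stmt_13 (β : ℝ) (hβ : 0 < β) (c₁ c₂m c₂p c₃ : ℝ)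
    (hc₁ : 0 ≤ c₁) (hc₂m : 0 ≤ c₂m) (hc₂p : 0 ≤ c₂p) (hc₃ : 0 ≤ c₃)
    (hsum : c₁ + c₂m + c₂p + c₃ = 1) (hc₁ne : c₁ ≠ 1)
    (u u' u'' : ℝ → ℝ) (d0m d0p dd0p : ℝ)
    (hcont : Continuous u)
    (htop : Tendsto u atTop (nhds 0)) (hbot : Tendsto u atBot (nhds 0))
    (hderiv : ∀ x : ℝ, x ≠ 0 → HasDerivAt u (u' x) x)
    (hderiv2 : ∀ x : ℝ, x ≠ 0 → HasDerivAt u' (u'' x) x)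
    (hode : ∀ x : ℝ, x ≠ 0 → β * u x = (1 / 2) * u'' x)
    (hd0m : Tendsto u' (nhdsWithin 0 (Iio 0)) (nhds d0m))
    (hd0p : Tendsto u' (nhdsWithin 0 (Ioi 0)) (nhds d0p))
    (hdd0p : Tendsto u'' (nhdsWithin 0 (Ioi 0)) (nhds dd0p))
    (hbc : c₁ * u 0 + c₂m * d0m - c₂p * d0p + (c₃ / 2) * dd0p = 0) :
    ∀ x : ℝ, u x = 0 :=
  stmt_13_general β hβ c₁ c₂m c₂p c₃ hc₁ hc₂m hc₂p hc₃ hsum u u' u'' d0m d0p dd0p hcont htop hbot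
    hderiv hderiv2 hode hd0m hd0p hdd0p hbc
end
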